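/- arXiv:1909.06941 — 2 statements merged into one kernel-verified Lean document; each statement's English description precedes it below -/
import Mathlib

section
/- Define g_n(s,p) = Σ_{i=1}^{n} [n brack i] · (s)_i / p^i for n ≥ 1, where [n brack i] is the unsigned Stirling number of the first kind and (s)_i the falling factorial. Then for every n ≥ 1, the two-variable polynomial (1+x)^n · g_n(s, 1+x), viewed as a polynomial in s and x, has all coefficients nonnegative. -/
/-!
Write `G_n = (1+x)^n g_n(s, 1+x) = ∑ᵢ [n brack i] (s)ᵢ (1+x)^(n-i)`. The recurrence
`[n+1 brack i] = [n brack i-1] + n [n brack i]` together with `(s)_{i+1} = (s)ᵢ (s - i)` gives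
`G_{n+1} = (s + n x) G_n + (1+x) ∂G_n/∂x`,
because `(s - i) + n (1+x) = (s + n x) + (n - i)` and `(1+x) ∂/∂x` multiplies `(1+x)^(n-i)`
by `n - i`. The right-hand side only adds, multiplies and differentiates, so starting from
`G_0 = 1` every `G_n` is the image of a polynomial with natural-number coefficients.
-/

open Finset MvPolynomial

/-- Unsigned Stirling numbers of the first kind. -/
def stir : ℕ → ℕ → ℕ
  | 0, 0 => 1
  | 0, _ + 1 => 0
  | _ + 1, 0 => 0
  | n + 1, i + 1 => stir n i + n * stir n (i + 1)

/-- The polynomial `(1+x)^n g_n(s, 1+x)` in the two variables `s = X 0`, `x = X 1`,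
obtained from `g_n(s,p) = ∑_{i=1}^n [n brack i] (s)_i p^{-i}` by substituting
`p = 1 + x` and clearing denominators. -/
noncomputable def gCleared (n : ℕ) : MvPolynomial (Fin 2) ℤ :=
  ∑ i ∈ Finset.Icc 1 n,
    MvPolynomial.C (stir n i : ℤ) * (∏ j ∈ Finset.range i, (X 0 - MvPolynomial.C (j : ℤ)))
      * (1 + X 1) ^ (n - i)

theorem stir_eq_zero_of_lt {n i : ℕ} (h : n < i) : stir n i = 0 := by
  induction n generalizing i with
  | zero => obtain ⟨i, rfl⟩ := Nat.exists_eq_succ_of_ne_zero (by omega : i ≠ 0); rfl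
  | succ n ih =>
    obtain ⟨i, rfl⟩ := Nat.exists_eq_succ_of_ne_zero (by omega : i ≠ 0)
    simp [stir, ih (by omega : n < i), ih (by omega : n < i + 1)]

section Recurrence

variable (R : Type*) [CommRing R]

noncomputable def fallingFactorial (i : ℕ) : MvPolynomial (Fin 2) R :=
  ∏ j ∈ range i, (X 0 - C (j : R))

/-- Unlike `gCleared`, the sum starts at `i = 0`, so that `gCleared' R 0 = 1`. -/
noncomputable def gCleared' (n : ℕ) : MvPolynomial (Fin 2) R :=
  ∑ i ∈ range (n + 1), C (stir n i : R) * fallingFactorial R i * (1 + X 1) ^ (n - i)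

variable {R}

theorem fallingFactorial_succ (i : ℕ) :
    fallingFactorial R (i + 1) = fallingFactorial R i * (X 0 - C (i : R)) :=
  prod_range_succ _ _

theorem pderiv_one_fallingFactorial (i : ℕ) : pderiv 1 (fallingFactorial R i) = 0 := by
  induction i with
  | zero => simp [fallingFactorial]
  | succ i ih => simp [fallingFactorial_succ, ih]

theorem one_add_X_mul_pderiv_pow (m : ℕ) :
    (1 + X 1 : MvPolynomial (Fin 2) R) * pderiv 1 ((1 + X 1) ^ m)
      = (m : MvPolynomial (Fin 2) R) * (1 + X 1) ^ m := by
  rw [pderiv_pow, map_add, pderiv_one, pderiv_X_self]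
  cases m with
  | zero => simp
  | succ m => rw [Nat.add_sub_cancel]; ring

theorem gCleared'_succ_summand (n i : ℕ) (hi : i ≤ n) (c : R) :
    (X 0 + (n : MvPolynomial (Fin 2) R) * X 1)
          * (C c * fallingFactorial R i * (1 + X 1) ^ (n - i))
        + (1 + X 1) * pderiv 1 (C c * fallingFactorial R i * (1 + X 1) ^ (n - i))
      = C c * fallingFactorial R (i + 1) * (1 + X 1) ^ (n - i)
        + (n : MvPolynomial (Fin 2) R)
          * (C c * fallingFactorial R i * (1 + X 1) ^ (n + 1 - i)) := by
  have hq := one_add_X_mul_pderiv_pow (R := R) (n - i)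
  rw [Nat.cast_sub hi] at hq
  rw [pderiv_mul, pderiv_C_mul, pderiv_one_fallingFactorial, fallingFactorial_succ, map_natCast,
    Nat.sub_add_comm hi, pow_succ]
  linear_combination C c * fallingFactorial R i * hq

theorem gCleared'_succ (n : ℕ) :
    gCleared' R (n + 1) = (X 0 + (n : MvPolynomial (Fin 2) R) * X 1) * gCleared' R n
      + (1 + X 1) * pderiv 1 (gCleared' R n) := by
  set f : ℕ → MvPolynomial (Fin 2) R := fun i ↦ (n : MvPolynomial (Fin 2) R)
    * (C (stir n i : R) * fallingFactorial R i * (1 + X 1) ^ (n + 1 - i))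
  have hf_last : f (n + 1) = 0 := by simp [f, stir_eq_zero_of_lt (Nat.lt_succ_self n)]
  have hf_zero : f 0 = 0 := by cases n <;> simp [f, stir]
  have hshift : ∑ i ∈ range (n + 1), f i = ∑ i ∈ range (n + 1), f (i + 1) := by
    rw [← add_zero (∑ i ∈ range (n + 1), f i), ← hf_last, ← sum_range_succ, sum_range_succ',
      hf_zero, add_zero]
  rw [gCleared', gCleared', sum_range_succ', map_sum, mul_sum, mul_sum, ← sum_add_distrib,
    sum_congr rfl fun i hi ↦ gCleared'_succ_summand n i (Nat.lt_succ_iff.mp (mem_range.mp hi)) _,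
    sum_add_distrib, hshift]
  simp only [f, stir, Nat.cast_zero, map_zero, zero_mul, add_zero, ← sum_add_distrib,
    Nat.add_sub_add_right]
  exact sum_congr rfl fun i _ ↦ by
    simp only [Nat.cast_add, Nat.cast_mul, map_add, map_mul, map_natCast]; ring

end Recurrence

noncomputable def gClearedNat : ℕ → MvPolynomial (Fin 2) ℕ
  | 0 => 1
  | n + 1 => (X 0 + (n : MvPolynomial (Fin 2) ℕ) * X 1) * gClearedNat n
      + (1 + X 1) * pderiv 1 (gClearedNat n)

theorem map_gClearedNat (R : Type*) [CommRing R] (n : ℕ) :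
    map (Nat.castRingHom R) (gClearedNat n) = gCleared' R n := by
  induction n with
  | zero => simp [gClearedNat, gCleared', stir, fallingFactorial]
  | succ n ih => simp [gClearedNat, gCleared'_succ, ← ih, pderiv_map]

theorem gCleared_eq_gCleared' {n : ℕ} (hn : 1 ≤ n) : gCleared n = gCleared' ℤ n := by
  have hstir : stir n 0 = 0 := by
    obtain ⟨m, rfl⟩ := Nat.exists_eq_add_of_le' hn
    rfl
  rw [gCleared', Nat.range_succ_eq_Icc_zero, ← insert_Icc_add_one_left_eq_Icc (Nat.zero_le n),
    sum_insert (by simp), hstir, Nat.cast_zero, map_zero, zero_mul, zero_mul, zero_add]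
  rfl

theorem stmt_8 (n : ℕ) (hn : 1 ≤ n) (d : Fin 2 →₀ ℕ) :
    0 ≤ MvPolynomial.coeff d (gCleared n) := by
  rw [gCleared_eq_gCleared' hn, ← map_gClearedNat, coeff_map]
  exact Int.natCast_nonneg _
end

section
/- Let A_{m,i}^k be the integers satisfying A_{m,i}^k = (k-1)(A_{m-1,i}^{k-1} + A_{m-1,i}^{k-2} + A_{m-1,i-1}^{k-2}) + (k+i-m-1)A_{m-1,i-1}^{k-1}, A_{0,0}^k = δ_{k,0}, A_{m,-1}^k = 0, A_{m,i}^{k} = 0 for k < 0. Then for every n ≥ 1, (1+x)^n g_n(s,1+x) = s^n + Σ_{m=1}^{n} Σ_{j=0}^{m} s^{n-m} x^j Σ_{k=m+1}^{2m} C(n,k) Σ_{i=0}^{m} (-1)^i C(m-i,j) A_{m,i}^k, as an identity of polynomials in s and x, where g_n(s,p) = Σ_{i=1}^n [n brack i](s)_i/p^i. -/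
open Finset MvPolynomial

/-- The three-parameter family of integers `A_{m,i}^k`. -/
def A : ℕ → ℤ → ℤ → ℤ
  | 0, i, k => if i = 0 ∧ k = 0 then 1 else 0
  | m + 1, i, k =>
      if i < 0 ∨ k < 0 then 0
      else (k - 1) * (A m i (k - 1) + A m i (k - 2) + A m (i - 1) (k - 2))
            + (k + i - (m + 1) - 1) * A m (i - 1) (k - 1)

/-!
Expanding `(s)_i = ∑_t (-1)^(i-t) [i t] s^t` and `(1+x)^(n-i)` binomially and substituting
`t = n - m`, `i = n - m + i'`, the coefficient of `s^(n-m) x^j` becomes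
`∑_{i'} (-1)^i' [n, n-m+i'] [n-m+i', n-m] C(m-i', j)`. Everything thus reduces to the Newton
series `[m+n, n+i] [n+i, n] = ∑_k A_{m,i}^k C(m+n, k)`. Both sides satisfy
`F(m+1,i,n+1) = F(m+1,i,n) + (n+i) F(m,i-1,n+1) + (m+n+1) F(m,i,n+1)`: on the left this is the
Stirling recursion applied to both factors, on the right it is the recursion defining `A` combined
with Pascal's rule and `N C(N,k) = k C(N,k) + (k+1) C(N,k+1)`. Finally `A_{m,i}^k = 0` unless
`m < k ≤ 2m` (for `m ≥ 1`), and the term `m = 0` is `s^n`.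
-/

theorem stir_eq_stirlingFirst : stir = Nat.stirlingFirst := by
  funext n k
  induction n generalizing k with
  | zero => cases k <;> rfl
  | succ n ih => cases k <;> simp [stir, Nat.stirlingFirst_succ_succ, ih, add_comm]

open Nat (stirlingFirst stirlingFirst_succ_succ stirlingFirst_eq_zero_of_lt stirlingFirst_self)

theorem prod_range_add_natCast_eq_sum_stirlingFirst {R : Type*} [CommSemiring R] (s : R)
    (i : ℕ) :
    ∏ j ∈ range i, (s + j) = ∑ t ∈ range (i + 1), stirlingFirst i t * s ^ t := by
  induction i with
  | zero => simp
  | succ i ih =>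
    have hshift : ∑ t ∈ range (i + 1), (stirlingFirst i t : R) * s ^ t
        = ∑ t ∈ range (i + 1), (stirlingFirst i (t + 1) : R) * s ^ (t + 1)
          + stirlingFirst i 0 := by
      simpa [sum_range_succ _ (i + 1), stirlingFirst_eq_zero_of_lt (Nat.lt_succ_self i)]
        using sum_range_succ' (fun t ↦ (stirlingFirst i t : R) * s ^ t) (i + 1)
    have hzero : (i : R) * stirlingFirst i 0 = 0 := by cases i <;> simp
    calc ∏ j ∈ range (i + 1), (s + j)
        = (∑ t ∈ range (i + 1), (stirlingFirst i t : R) * s ^ t) * s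
          + i * ∑ t ∈ range (i + 1), (stirlingFirst i t : R) * s ^ t := by
          rw [prod_range_succ, ih]; ring
      _ = ∑ t ∈ range (i + 1), (stirlingFirst i t : R) * s ^ (t + 1)
          + i * ∑ t ∈ range (i + 1), (stirlingFirst i (t + 1) : R) * s ^ (t + 1) := by
          rw [sum_mul, hshift, mul_add, hzero, add_zero]
          simp only [pow_succ, mul_assoc]
      _ = ∑ t ∈ range (i + 1 + 1), stirlingFirst (i + 1) t * s ^ t := by
          rw [sum_range_succ' _ (i + 1)]
          simp only [stirlingFirst_succ_succ, Nat.stirlingFirst_succ_zero, Nat.cast_add,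
            Nat.cast_mul, Nat.cast_zero, add_mul, sum_add_distrib, mul_sum, zero_mul, add_zero,
            mul_assoc]
          exact add_comm _ _

theorem prod_range_sub_natCast_eq_sum_stirlingFirst {R : Type*} [CommRing R] (s : R) (i : ℕ) :
    ∏ j ∈ range i, (s - j)
      = ∑ t ∈ range (i + 1), (-1) ^ (i + t) * stirlingFirst i t * s ^ t := by
  calc ∏ j ∈ range i, (s - j) = ∏ j ∈ range i, (-1) * (-s + j) :=
        prod_congr rfl fun _ _ ↦ by ring
    _ = _ := by
        rw [prod_mul_distrib, prod_const, card_range,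
          prod_range_add_natCast_eq_sum_stirlingFirst, mul_sum]
        exact sum_congr rfl fun t _ ↦ by rw [neg_pow, pow_add]; ring

theorem sum_range_sum_range_succ_eq_reflect {M : Type*} [AddCommMonoid M] (f : ℕ → ℕ → M)
    (n : ℕ) :
    ∑ i ∈ range (n + 1), ∑ t ∈ range (i + 1), f i t
      = ∑ m ∈ range (n + 1), ∑ i ∈ range (m + 1), f (n - m + i) (n - m) := by
  rw [sum_comm' (t' := range (n + 1)) (s' := fun t ↦ Ico t (n + 1)) (by simp; omega),
    ← sum_range_reflect]
  refine sum_congr rfl fun m hm ↦ ?_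
  rw [sum_Ico_eq_sum_range, show n + 1 - 1 - m = n - m by omega,
    show n + 1 - (n - m) = m + 1 by simp at hm; omega]

theorem one_add_pow_eq_sum_range {R : Type*} [CommSemiring R] (x : R) {d N : ℕ} (h : d ≤ N) :
    (1 + x) ^ d = ∑ j ∈ range (N + 1), (d.choose j : R) * x ^ j := by
  rw [add_comm, add_pow]
  refine (sum_congr rfl fun j _ ↦ by ring).trans
    (sum_subset (range_subset_range.2 (by omega)) fun j _ hj ↦ ?_)
  rw [Nat.choose_eq_zero_of_lt (by simp at hj; omega), Nat.cast_zero, zero_mul]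

theorem stirlingFirst_zero_right {n : ℕ} (hn : n ≠ 0) : stirlingFirst n 0 = 0 := by
  obtain ⟨n, rfl⟩ := Nat.exists_eq_succ_of_ne_zero hn
  rfl

theorem sum_stirlingFirst_mul_prod_sub_mul_one_add_pow_eq_sum_range {R : Type*} [CommRing R]
    (s x : R) {n : ℕ} (hn : 1 ≤ n) :
    ∑ i ∈ Icc 1 n, (stirlingFirst n i : R) * (∏ j ∈ range i, (s - j)) * (1 + x) ^ (n - i)
      = ∑ m ∈ range (n + 1), ∑ j ∈ range (m + 1), s ^ (n - m) * x ^ j *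
          ((∑ i ∈ range (m + 1), (-1) ^ i * stirlingFirst n (n - m + i)
            * stirlingFirst (n - m + i) (n - m) * (m - i).choose j : ℤ) : R) := by
  have hrange : ∑ i ∈ Icc 1 n,
        (stirlingFirst n i : R) * (∏ j ∈ range i, (s - j)) * (1 + x) ^ (n - i)
      = ∑ i ∈ range (n + 1),
          (stirlingFirst n i : R) * (∏ j ∈ range i, (s - j)) * (1 + x) ^ (n - i) := by
    refine sum_subset (fun i hi ↦ by simp at hi ⊢; omega) fun i hi hi' ↦ ?_
    rw [show i = 0 by simp at hi hi'; omega, stirlingFirst_zero_right (by omega), Nat.cast_zero,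
      zero_mul, zero_mul]
  have hsign (m i : ℕ) : (-1 : R) ^ (n - m + i + (n - m)) = (-1) ^ i := by
    rw [show n - m + i + (n - m) = i + 2 * (n - m) by ring, pow_add, pow_mul, neg_one_sq, one_pow,
      mul_one]
  calc _ = ∑ i ∈ range (n + 1), ∑ t ∈ range (i + 1), (-1) ^ (i + t)
          * (stirlingFirst n i * stirlingFirst i t : R) * s ^ t * (1 + x) ^ (n - i) := by
        rw [hrange]
        simp_rw [prod_range_sub_natCast_eq_sum_stirlingFirst, mul_sum, sum_mul]
        exact sum_congr rfl fun i _ ↦ sum_congr rfl fun t _ ↦ by ring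
    _ = ∑ m ∈ range (n + 1), ∑ i ∈ range (m + 1), ∑ j ∈ range (m + 1),
          s ^ (n - m) * x ^ j *
          ((-1) ^ i * stirlingFirst n (n - m + i) * stirlingFirst (n - m + i) (n - m)
            * (m - i).choose j : R) := by
        rw [sum_range_sum_range_succ_eq_reflect]
        refine sum_congr rfl fun m hm ↦ sum_congr rfl fun i hi ↦ ?_
        simp only [mem_range] at hm hi
        rw [hsign, show n - (n - m + i) = m - i by omega,
          one_add_pow_eq_sum_range x (show m - i ≤ m by omega), mul_sum]
        exact sum_congr rfl fun j _ ↦ by ring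
    _ = _ := by
        refine sum_congr rfl fun m _ ↦ ?_
        rw [sum_comm]
        push_cast
        simp only [mul_sum]

theorem self_mul_choose (N k : ℕ) :
    N * N.choose k = k * N.choose k + (k + 1) * N.choose (k + 1) := by
  rcases le_or_gt k N with h | h
  · rw [mul_comm (k + 1), Nat.choose_succ_right_eq, mul_comm (N.choose k), ← add_mul,
      Nat.add_sub_cancel' h, mul_comm]
  · simp [Nat.choose_eq_zero_of_lt h, Nat.choose_eq_zero_of_lt (Nat.lt_succ_of_lt h)]

section NewtonSeries

variable {R : Type*} [CommRing R]

/-- `∑_k a_k C(N, k)`; the sequence is indexed by `ℤ` so that shifted sequences `a (k - 1)` need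
no truncated subtraction. -/
def newtonSeries (a : ℤ → R) (N : ℕ) : R :=
  ∑ k ∈ range (N + 1), a k * (N.choose k : R)

theorem newtonSeries_add (a b : ℤ → R) (N : ℕ) :
    newtonSeries (fun k ↦ a k + b k) N = newtonSeries a N + newtonSeries b N := by
  simp only [newtonSeries, add_mul, sum_add_distrib]

theorem newtonSeries_const_mul (c : R) (a : ℤ → R) (N : ℕ) :
    newtonSeries (fun k ↦ c * a k) N = c * newtonSeries a N := by
  simp only [newtonSeries, mul_sum, mul_assoc]

theorem newtonSeries_congr {a b : ℤ → R} {N : ℕ} (h : ∀ k : ℕ, a k = b k) :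
    newtonSeries a N = newtonSeries b N :=
  sum_congr rfl fun k _ ↦ by rw [h]

theorem newtonSeries_succ (a : ℤ → R) (N : ℕ) :
    newtonSeries a (N + 1) = newtonSeries a N + newtonSeries (fun k ↦ a (k + 1)) N := by
  simpa [newtonSeries, mul_comm] using sum_choose_succ_mul (R := R) (fun k _ ↦ a k) N

theorem natCast_mul_newtonSeries (a : ℤ → R) (N : ℕ) :
    N * newtonSeries a N = newtonSeries (fun k ↦ k * (a k + a (k - 1))) N := by
  have hshift : ∑ k ∈ range (N + 1), (k : R) * a (k - 1) * N.choose k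
      = ∑ k ∈ range (N + 1), a k * ((k + 1) * N.choose (k + 1)) := by
    rw [sum_range_succ', sum_range_succ _ N, Nat.choose_succ_self]
    push_cast
    simp only [add_sub_cancel_right, zero_mul, mul_zero, add_zero]
    exact sum_congr rfl fun k _ ↦ by ring
  have hterm (k : ℕ) : a k * ((N : R) * N.choose k)
      = (k : R) * a k * N.choose k + a k * ((k + 1) * N.choose (k + 1)) := by
    have := congrArg (Nat.cast (R := R)) (self_mul_choose N k)
    push_cast at this
    rw [this]; ring
  simp only [newtonSeries, mul_sum, Int.cast_natCast, mul_add, add_mul, sum_add_distrib]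
  rw [hshift, ← sum_add_distrib]
  exact sum_congr rfl fun k _ ↦ by rw [mul_left_comm, hterm]

end NewtonSeries

theorem A_of_neg {m : ℕ} {i k : ℤ} (h : i < 0 ∨ k < 0) : A m i k = 0 := by
  cases m with
  | zero => rw [A, if_neg (by omega)]
  | succ m => rw [A, if_pos h]

theorem A_succ_of_nonneg {m : ℕ} {i k : ℤ} (hi : 0 ≤ i) (hk : 0 ≤ k) :
    A (m + 1) i k = (k - 1) * (A m i (k - 1) + A m i (k - 2) + A m (i - 1) (k - 2))
      + (k + i - (m + 1) - 1) * A m (i - 1) (k - 1) := by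
  rw [A, if_neg (by omega)]

theorem A_eq_zero_of_le {m : ℕ} (hm : 1 ≤ m) {i k : ℤ} (hk : k ≤ m) : A m i k = 0 := by
  induction m, hm using Nat.le_induction generalizing i k with
  | base =>
    rcases lt_or_ge i 0 with hi | hi
    · exact A_of_neg (.inl hi)
    rcases lt_or_ge k 0 with hk' | hk'
    · exact A_of_neg (.inr hk')
    rw [A_succ_of_nonneg hi hk']
    simp only [A]
    split_ifs <;> omega
  | succ m hm ih =>
    rcases lt_or_ge i 0 with hi | hi
    · exact A_of_neg (.inl hi)
    rcases lt_or_ge k 0 with hk' | hk'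
    · exact A_of_neg (.inr hk')
    rw [A_succ_of_nonneg hi hk', ih, ih, ih, ih] <;> push_cast at hk ⊢ <;> omega

theorem A_eq_zero_of_lt {m : ℕ} {i k : ℤ} (hk : 2 * m < k) : A m i k = 0 := by
  induction m generalizing i k with
  | zero => rw [A, if_neg (by omega)]
  | succ m ih =>
    rcases lt_or_ge i 0 with hi | hi
    · exact A_of_neg (.inl hi)
    rw [A_succ_of_nonneg hi (by omega), ih, ih, ih, ih] <;> push_cast at hk ⊢ <;> omega

theorem newtonSeries_A_zero (i : ℤ) (N : ℕ) :
    newtonSeries (A 0 i) N = if i = 0 then 1 else 0 := by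
  rw [newtonSeries, sum_range_succ']
  simp [A, show ∀ k : ℕ, (k : ℤ) + 1 ≠ 0 by omega]

theorem newtonSeries_A_succ_self (m : ℕ) (i : ℤ) : newtonSeries (A (m + 1) i) (m + 1) = 0 :=
  sum_eq_zero fun k hk ↦ by
    rw [A_eq_zero_of_le (Nat.le_add_left 1 m) (by simp at hk; omega), zero_mul]

theorem newtonSeries_A_succ_succ (m N : ℕ) {i : ℤ} (hi : 0 ≤ i) :
    newtonSeries (A (m + 1) i) (N + 1) = newtonSeries (A (m + 1) i) N
      + N * newtonSeries (A m i) N + (N + i - m - 1) * newtonSeries (A m (i - 1)) N := by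
  have hshift : newtonSeries (fun k ↦ A (m + 1) i (k + 1)) N
      = newtonSeries (fun k ↦ k * (A m i k + A m i (k - 1))
          + k * (A m (i - 1) k + A m (i - 1) (k - 1)) + (i - m - 1) * A m (i - 1) k) N :=
    newtonSeries_congr fun k ↦ by
      rw [A_succ_of_nonneg hi (by omega), add_sub_cancel_right,
        show (k : ℤ) + 1 - 2 = k - 1 by ring]
      ring
  have hmul (j : ℤ) := natCast_mul_newtonSeries (A m j) N
  simp only [Int.cast_id] at hmul
  rw [newtonSeries_succ, hshift, newtonSeries_add, newtonSeries_add, ← hmul, ← hmul,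
    newtonSeries_const_mul]
  ring

theorem newtonSeries_A_of_neg (m : ℕ) {i : ℤ} (hi : i < 0) (N : ℕ) :
    newtonSeries (A m i) N = 0 :=
  sum_eq_zero fun _ _ ↦ by rw [A_of_neg (.inl hi), zero_mul]

theorem stirlingFirst_mul_stirlingFirst_succ_succ (N a b : ℕ) :
    stirlingFirst (N + 1) (a + 1) * stirlingFirst (a + 1) (b + 1)
      = stirlingFirst N a * stirlingFirst a b + a * (stirlingFirst N a * stirlingFirst a (b + 1))
        + N * (stirlingFirst N (a + 1) * stirlingFirst (a + 1) (b + 1)) := by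
  rw [stirlingFirst_succ_succ N a, stirlingFirst_succ_succ a b]
  ring

theorem stirlingFirst_mul_stirlingFirst_eq_newtonSeries (m i n : ℕ) :
    (stirlingFirst (m + n) (n + i) * stirlingFirst (n + i) n : ℤ)
      = newtonSeries (A m i) (m + n) := by
  induction m generalizing i n with
  | zero =>
    rw [newtonSeries_A_zero]
    cases i <;> simp [stirlingFirst_self, stirlingFirst_eq_zero_of_lt, Nat.cast_add_one_ne_zero]
  | succ m ihm =>
    induction n with
    | zero => cases i <;> simp [newtonSeries_A_succ_self]
    | succ n ihn =>
      have hprev : (stirlingFirst (m + n + 1) (n + i) * stirlingFirst (n + i) n : ℤ)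
          = newtonSeries (A (m + 1) i) (m + n + 1) := by
        simpa only [show m + 1 + n = m + n + 1 by omega] using ihn
      have hsame : (stirlingFirst (m + n + 1) (n + i + 1) * stirlingFirst (n + i + 1) (n + 1) : ℤ)
          = newtonSeries (A m i) (m + n + 1) := by
        simpa only [show n + 1 + i = n + i + 1 by omega, show m + (n + 1) = m + n + 1 by omega]
          using ihm i (n + 1)
      have hlower : ((n + i : ℕ) : ℤ)
            * (stirlingFirst (m + n + 1) (n + i) * stirlingFirst (n + i) (n + 1))
          = (n + i) * newtonSeries (A m (i - 1)) (m + n + 1) := by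
        cases i with
        | zero => simp [stirlingFirst_eq_zero_of_lt, newtonSeries_A_of_neg]
        | succ j =>
          have h := ihm j (n + 1)
          rw [show n + 1 + j = n + (j + 1) by omega, show m + (n + 1) = m + n + 1 by omega] at h
          push_cast
          rw [add_sub_cancel_right, h]
      have hrec := congrArg (Nat.cast (R := ℤ))
        (stirlingFirst_mul_stirlingFirst_succ_succ (m + n + 1) (n + i) n)
      push_cast at hrec hlower
      rw [show m + 1 + (n + 1) = m + n + 1 + 1 by omega, show n + 1 + i = n + i + 1 by omega,
        hrec, newtonSeries_A_succ_succ _ _ (Int.natCast_nonneg i), hprev, hsame, hlower]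
      push_cast
      ring

theorem newtonSeries_A_eq_sum_Icc {m : ℕ} (hm : 1 ≤ m) (i : ℤ) (n : ℕ) :
    newtonSeries (A m i) n = ∑ k ∈ Icc (m + 1) (2 * m), (n.choose k : ℤ) * A m i k := by
  have hlarge : newtonSeries (A m i) n = ∑ k ∈ range (n + 2 * m + 1), A m i k * n.choose k :=
    sum_subset (range_subset_range.2 (by omega)) fun k _ hk ↦ by
      rw [Nat.choose_eq_zero_of_lt (by simp at hk; omega), Nat.cast_zero, mul_zero]
  rw [hlarge, eq_comm]
  refine (sum_congr rfl fun k _ ↦ mul_comm _ _).trans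
    (sum_subset (fun k hk ↦ by simp at hk ⊢; omega) fun k _ hk ↦ ?_)
  simp only [mem_Icc, not_and_or, not_le] at hk
  rcases hk with hk | hk
  · rw [A_eq_zero_of_le hm (by omega), zero_mul]
  · rw [A_eq_zero_of_lt (by omega), zero_mul]

theorem sum_neg_one_pow_mul_stirlingFirst_mul_choose_eq_sum_A {m n : ℕ} (hm : 1 ≤ m)
    (hmn : m ≤ n) (j : ℕ) :
    ∑ i ∈ range (m + 1), (-1) ^ i * (stirlingFirst n (n - m + i) : ℤ)
        * stirlingFirst (n - m + i) (n - m) * (m - i).choose j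
      = ∑ k ∈ Icc (m + 1) (2 * m), (n.choose k : ℤ)
          * ∑ i ∈ range (m + 1), (-1 : ℤ) ^ i * ((m - i).choose j : ℤ) * A m i k := by
  have hnewton (i : ℕ) : (stirlingFirst n (n - m + i) * stirlingFirst (n - m + i) (n - m) : ℤ)
      = ∑ k ∈ Icc (m + 1) (2 * m), (n.choose k : ℤ) * A m i k := by
    rw [← newtonSeries_A_eq_sum_Icc hm]
    simpa only [Nat.add_sub_cancel' hmn] using
      stirlingFirst_mul_stirlingFirst_eq_newtonSeries m i (n - m)
  simp only [mul_sum]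
  rw [sum_comm]
  refine sum_congr rfl fun i _ ↦ ?_
  rw [show ∀ a b c d : ℤ, a * b * c * d = a * d * (b * c) by intros; ring, hnewton, mul_sum]
  exact sum_congr rfl fun k _ ↦ by ring

theorem sum_stirlingFirst_mul_prod_sub_mul_one_add_pow_eq_sum_A {R : Type*} [CommRing R]
    (s x : R) {n : ℕ} (hn : 1 ≤ n) :
    ∑ i ∈ Icc 1 n, (stirlingFirst n i : R) * (∏ j ∈ range i, (s - j)) * (1 + x) ^ (n - i)
      = s ^ n + ∑ m ∈ Icc 1 n, ∑ j ∈ range (m + 1), s ^ (n - m) * x ^ j *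
          ((∑ k ∈ Icc (m + 1) (2 * m), (n.choose k : ℤ)
            * ∑ i ∈ range (m + 1),
                (-1 : ℤ) ^ i * ((m - i).choose j : ℤ) * A m i k : ℤ) : R) := by
  rw [sum_stirlingFirst_mul_prod_sub_mul_one_add_pow_eq_sum_range _ _ hn, range_eq_Ico,
    sum_eq_sum_Ico_succ_bot (by omega : 0 < n + 1), Ico_add_one_right_eq_Icc, zero_add]
  refine congrArg₂ (· + ·) (by simp [stirlingFirst_self])
    (sum_congr rfl fun m hm ↦ sum_congr rfl fun j _ ↦ ?_)
  rw [mem_Icc] at hm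
  rw [sum_neg_one_pow_mul_stirlingFirst_mul_choose_eq_sum_A hm.1 hm.2]

theorem stmt_19 (n : ℕ) (hn : 1 ≤ n) :
    gCleared n
      = (X 0 : MvPolynomial (Fin 2) ℤ) ^ n
          + ∑ m ∈ Finset.Icc 1 n, ∑ j ∈ Finset.range (m + 1),
              (X 0) ^ (n - m) * (X 1) ^ j *
                MvPolynomial.C (∑ k ∈ Finset.Icc (m + 1) (2 * m),
                  (n.choose k : ℤ) *
                    ∑ i ∈ Finset.range (m + 1),
                      (-1 : ℤ) ^ i * ((m - i).choose j : ℤ) * A m i k) := by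
  simp only [gCleared, stir_eq_stirlingFirst, map_natCast, eq_intCast]
  exact sum_stirlingFirst_mul_prod_sub_mul_one_add_pow_eq_sum_A _ _ hn
end
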